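/- Let v₁, v₂ ∈ ℝ³ be non-parallel spacelike vectors, and for i = 1, 2 let vᵢ⁺, vᵢ⁻ be future-pointing null vectors orthogonal to vᵢ spanning the two null directions of vᵢ^⊥. Assume v₁, v₂ are consistently oriented: ⟨v₁, v₂⟩ < 0, and ⟨vᵢ, v_j^±⟩ ≤ 0 for i ≠ j. Assume further that v₁⁻ = v₂⁺, and let pᵢ = aᵢ·vᵢ⁻ − bᵢ·vᵢ⁺ with aᵢ, bᵢ > 0 for i = 1, 2. Then the crooked planes C(v₁, p₁) and C(v₂, p₂) are disjoint. -/

import Mathlib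

/-- The Minkowski bilinear form on ℝ³: ⟨x,y⟩ = x₁y₁ + x₂y₂ − x₃y₃. -/
def minkowski (x y : Fin 3 → ℝ) : ℝ := x 0 * y 0 + x 1 * y 1 - x 2 * y 2

/-- The crooked plane with vertex `p`, director `v` and future-pointing null
vectors `vp = v⁺`, `vm = v⁻`: the union of the stem
`p + {x : ⟨x,v⟩ = 0, ⟨x,x⟩ ≤ 0}` and the wings `p + ℝ·v⁺ + [0,∞)·v` and
`p + ℝ·v⁻ + (−∞,0]·v`. -/
def crookedPlane (v vp vm p : Fin 3 → ℝ) : Set (Fin 3 → ℝ) :=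
  {q | minkowski (q - p) v = 0 ∧ minkowski (q - p) (q - p) ≤ 0} ∪
  {q | ∃ s t : ℝ, 0 ≤ t ∧ q = p + s • vp + t • v} ∪
  {q | ∃ s t : ℝ, t ≤ 0 ∧ q = p + s • vm + t • v}

/-!
Put `u = v₁⁺`, `w = v₁⁻ = v₂⁺`, `z = v₂⁻`. These future null vectors have pairwise negative
products (for `u, z` because `v₁ ∦ v₂`), so they form a frame of `ℝ³`. In frame coordinates
`(α, β, γ)` every stem and wing is cut out by sign conditions and at most one linear equation, and
`C(v₂, p₂)` is described exactly like `C(v₁, p₁)` after rotating the frame `(u, w, z) ↦ (w, z, u)`.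
Where `γ ≤ 0` a sign argument excludes a common point; where `γ > 0` only the wing of
`C(v₁, p₁)` along `w` and the wing of `C(v₂, p₂)` along `w` remain, and they lie in the distinct
parallel planes `⟨q, w⟩ = ⟨p₁, w⟩ > 0` and `⟨q, w⟩ = ⟨p₂, w⟩ < 0`.
-/

section Bilinear

variable (x y z : Fin 3 → ℝ) (c : ℝ)

theorem minkowski_comm : minkowski x y = minkowski y x := by
  simp only [minkowski]; ring

@[simp] theorem minkowski_add_left : minkowski (x + y) z = minkowski x z + minkowski y z := by
  simp only [minkowski, Pi.add_apply]; ring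

@[simp] theorem minkowski_add_right : minkowski x (y + z) = minkowski x y + minkowski x z := by
  simp only [minkowski, Pi.add_apply]; ring

@[simp] theorem minkowski_sub_left : minkowski (x - y) z = minkowski x z - minkowski y z := by
  simp only [minkowski, Pi.sub_apply]; ring

@[simp] theorem minkowski_sub_right : minkowski x (y - z) = minkowski x y - minkowski x z := by
  simp only [minkowski, Pi.sub_apply]; ring

@[simp] theorem minkowski_smul_left : minkowski (c • x) y = c * minkowski x y := by
  simp only [minkowski, Pi.smul_apply, smul_eq_mul]; ring

@[simp] theorem minkowski_smul_right : minkowski x (c • y) = c * minkowski x y := by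
  simp only [minkowski, Pi.smul_apply, smul_eq_mul]; ring

end Bilinear

section Gram

def gram (b : Fin 3 → Fin 3 → ℝ) : Matrix (Fin 3) (Fin 3) ℝ :=
  Matrix.of fun i j => minkowski (b i) (b j)

variable {b : Fin 3 → Fin 3 → ℝ}

theorem gram_mulVec (c : Fin 3 → ℝ) :
    (gram b).mulVec c = fun i => minkowski (∑ j, c j • b j) (b i) := by
  ext i
  simp only [Matrix.mulVec, dotProduct, gram, Matrix.of_apply, minkowski_comm (b i),
    Fin.sum_univ_three, minkowski_add_left, minkowski_smul_left]
  ring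

theorem linearIndependent_of_det_gram_ne_zero (h : (gram b).det ≠ 0) :
    LinearIndependent ℝ b := by
  refine Fintype.linearIndependent_iff.mpr fun c hc => congrFun ?_
  exact Matrix.eq_zero_of_mulVec_eq_zero h (by rw [gram_mulVec, hc]; funext i; simp [minkowski])

theorem exists_sum_eq_of_det_gram_ne_zero (h : (gram b).det ≠ 0) (q : Fin 3 → ℝ) :
    ∃ c : Fin 3 → ℝ, ∑ i, c i • b i = q := by
  have hspan := (linearIndependent_of_det_gram_ne_zero h).span_eq_top_of_card_eq_finrank
    (by simp)
  exact (Submodule.mem_span_range_iff_exists_fun ℝ).mp (hspan ▸ Submodule.mem_top)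

theorem exists_smul_add_smul_add_smul_eq {u w z : Fin 3 → ℝ} (h : (gram ![u, w, z]).det ≠ 0)
    (q : Fin 3 → ℝ) : ∃ α β γ : ℝ, α • u + β • w + γ • z = q := by
  obtain ⟨c, hc⟩ := exists_sum_eq_of_det_gram_ne_zero h q
  exact ⟨c 0, c 1, c 2, by simpa [Fin.sum_univ_three] using hc⟩

theorem eq_zero_of_det_gram_ne_zero (h : (gram b).det ≠ 0) {y : Fin 3 → ℝ}
    (hy : ∀ i, minkowski y (b i) = 0) : y = 0 := by
  obtain ⟨c, rfl⟩ := exists_sum_eq_of_det_gram_ne_zero h y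
  obtain rfl : c = 0 := Matrix.eq_zero_of_mulVec_eq_zero h (by rw [gram_mulVec]; exact funext hy)
  simp

end Gram

def IsFutureNull (x : Fin 3 → ℝ) : Prop := minkowski x x = 0 ∧ 0 < x 2

namespace IsFutureNull

variable {x y : Fin 3 → ℝ}

theorem minkowski_nonpos (hx : IsFutureNull x) (hy : IsFutureNull y) : minkowski x y ≤ 0 := by
  obtain ⟨hx, hx2⟩ := hx
  obtain ⟨hy, hy2⟩ := hy
  unfold minkowski at hx hy ⊢
  have lagrange : (x 0 * y 0 + x 1 * y 1) ^ 2 + (x 0 * y 1 - x 1 * y 0) ^ 2 = (x 2 * y 2) ^ 2 := by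
    linear_combination (y 0 ^ 2 + y 1 ^ 2) * hx + x 2 ^ 2 * hy
  nlinarith [sq_nonneg (x 0 * y 1 - x 1 * y 0), mul_pos hx2 hy2]

theorem exists_eq_smul_of_minkowski_eq_zero (hx : IsFutureNull x) (hy : IsFutureNull y)
    (h : minkowski x y = 0) : ∃ c : ℝ, x = c • y := by
  -- `d` is a null vector with vanishing time coordinate, hence zero.
  set d := y 2 • x - x 2 • y
  have hd2 : d 2 = 0 := by simp only [d, Pi.sub_apply, Pi.smul_apply, smul_eq_mul]; ring
  have hdd : minkowski d d = 0 := by simp [d, hx.1, hy.1, h, minkowski_comm y x]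
  unfold minkowski at hdd
  have hd0 : d 0 = 0 := by nlinarith [sq_nonneg (d 0), sq_nonneg (d 1)]
  have hd1 : d 1 = 0 := by nlinarith [sq_nonneg (d 0), sq_nonneg (d 1)]
  have hd : d = 0 := by
    funext i
    fin_cases i
    exacts [hd0, hd1, hd2]
  refine ⟨x 2 / y 2, ?_⟩
  rw [div_eq_inv_mul, ← smul_smul]
  exact (eq_inv_smul_iff₀ hy.2.ne').mpr (sub_eq_zero.mp hd)

theorem minkowski_neg (hx : IsFutureNull x) (hy : IsFutureNull y) (h : ¬ ∃ c : ℝ, x = c • y) :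
    minkowski x y < 0 :=
  (hx.minkowski_nonpos hy).lt_of_ne fun h0 => h (hx.exists_eq_smul_of_minkowski_eq_zero hy h0)

end IsFutureNull

section NullFrame

variable {u w z v v' : Fin 3 → ℝ}

theorem det_gram_ne_zero_of_null (hu : minkowski u u = 0)
    (hw : minkowski w w = 0) (hz : minkowski z z = 0) (huw : minkowski u w ≠ 0)
    (hwz : minkowski w z ≠ 0) (hzu : minkowski z u ≠ 0) : (gram ![u, w, z]).det ≠ 0 := by
  have hdet : (gram ![u, w, z]).det = 2 * minkowski u w * minkowski w z * minkowski z u := by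
    simp only [gram, Matrix.det_fin_three, Matrix.of_apply, Matrix.cons_val_zero,
      Matrix.cons_val_one, Matrix.cons_val, hu, hw, hz, minkowski_comm w u, minkowski_comm z w,
      minkowski_comm u z]
    ring
  rw [hdet]
  exact mul_ne_zero (mul_ne_zero (mul_ne_zero two_ne_zero huw) hwz) hzu

theorem minkowski_ne_zero_of_orthogonal (hdet : (gram ![u, w, z]).det ≠ 0)
    (hv : minkowski v v ≠ 0) (hvu : minkowski v u = 0) (hvw : minkowski v w = 0) :
    minkowski v z ≠ 0 := by
  intro hvz
  have hv0 : v = 0 := eq_zero_of_det_gram_ne_zero hdet fun i => by fin_cases i <;> simpa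
  simp [hv0, minkowski] at hv

theorem exists_eq_smul_of_orthogonal (hu : minkowski u u = 0) (hw : minkowski w w = 0)
    (huw : minkowski u w ≠ 0) (hv : minkowski v v ≠ 0) (hvu : minkowski v u = 0)
    (hvw : minkowski v w = 0) (hv'u : minkowski v' u = 0) (hv'w : minkowski v' w = 0) :
    ∃ c : ℝ, v' = c • v := by
  have hdet : (gram ![u, w, v]).det ≠ 0 := by
    simp [gram, Matrix.det_fin_three, hu, hw, minkowski_comm u v, minkowski_comm w v, hvu, hvw,
      minkowski_comm w u, huw, hv]
  have hd : minkowski v v • v' - minkowski v' v • v = 0 :=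
    eq_zero_of_det_gram_ne_zero hdet fun i => by
      fin_cases i <;> simp [hvu, hvw, hv'u, hv'w, mul_comm]
  refine ⟨minkowski v' v / minkowski v v, ?_⟩
  rw [div_eq_inv_mul, ← smul_smul]
  exact (eq_inv_smul_iff₀ hv).mpr (sub_eq_zero.mp hd)

theorem minkowski_neg_of_not_parallel {v₁ v₂ : Fin 3 → ℝ} (hu : IsFutureNull u)
    (hw : minkowski w w = 0) (hz : IsFutureNull z) (huw : minkowski u w ≠ 0)
    (hv₁ : minkowski v₁ v₁ ≠ 0) (h₁u : minkowski v₁ u = 0) (h₁w : minkowski v₁ w = 0)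
    (h₂w : minkowski v₂ w = 0) (h₂z : minkowski v₂ z = 0) (hpar : ¬ ∃ c : ℝ, v₂ = c • v₁) :
    minkowski z u < 0 := by
  refine hz.minkowski_neg hu fun ⟨c, hc⟩ => hpar ?_
  have hc0 : c ≠ 0 := by
    rintro rfl
    simpa [hc] using hz.2
  have h₂u : minkowski v₂ u = 0 := by simpa [hc, hc0] using h₂z
  exact exists_eq_smul_of_orthogonal hu.1 hw huw hv₁ h₁u h₁w h₂u h₂w

end NullFrame

theorem minkowski_sub_of_mem_crookedPlane {v vp vm p q : Fin 3 → ℝ}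
    (hvp : minkowski vp vp = 0) (hvm : minkowski vm vm = 0) (hv : 0 ≤ minkowski v v)
    (hvvp : minkowski v vp = 0) (hvvm : minkowski v vm = 0) (hq : q ∈ crookedPlane v vp vm p) :
    (minkowski (q - p) v = 0 ∧ minkowski (q - p) (q - p) ≤ 0) ∨
      (minkowski (q - p) vp = 0 ∧ 0 ≤ minkowski (q - p) v) ∨
      (minkowski (q - p) vm = 0 ∧ minkowski (q - p) v ≤ 0) := by
  rcases hq with (hstem | ⟨s, t, ht, rfl⟩) | ⟨s, t, ht, rfl⟩
  · exact Or.inl hstem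
  · refine Or.inr (Or.inl ⟨?_, ?_⟩)
    · simp [add_assoc, hvp, hvvp]
    · simpa [add_assoc, hvvp, minkowski_comm vp v] using mul_nonneg ht hv
  · refine Or.inr (Or.inr ⟨?_, ?_⟩)
    · simp [add_assoc, hvm, hvvm]
    · simpa [add_assoc, hvvm, minkowski_comm vm v] using mul_nonpos_of_nonpos_of_nonneg ht hv

/-- What `crookedCoords_of_mem_crookedPlane` extracts from
`α • u + β • w + γ • z ∈ C(v, a • w - b • u)` with `v⁺ = u`, `v⁻ = w`, where `P = ⟨u, w⟩`,
`Q = ⟨w, z⟩`, `R = ⟨z, u⟩`: one disjunct for the stem and one for each wing. -/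
def CrookedCoords (P Q R a b α β γ : ℝ) : Prop :=
  (γ = 0 ∧ 0 ≤ (α + b) * (β - a)) ∨ (γ ≤ 0 ∧ (β - a) * P + γ * R = 0) ∨
    (0 ≤ γ ∧ (α + b) * P + γ * Q = 0)

theorem crookedCoords_of_mem_crookedPlane {u w z v : Fin 3 → ℝ} {a b α β γ : ℝ}
    (hu : minkowski u u = 0) (hw : minkowski w w = 0) (huw : minkowski u w < 0)
    (hv : 0 ≤ minkowski v v) (hvu : minkowski v u = 0) (hvw : minkowski v w = 0)
    (hvz : minkowski v z < 0)
    (hq : α • u + β • w + γ • z ∈ crookedPlane v u w (a • w - b • u)) :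
    CrookedCoords (minkowski u w) (minkowski w z) (minkowski z u) a b α β γ := by
  have hx : α • u + β • w + γ • z - (a • w - b • u) = (α + b) • u + (β - a) • w + γ • z := by
    module
  have hxv : minkowski ((α + b) • u + (β - a) • w + γ • z) v = γ * minkowski v z := by
    simp [minkowski_comm u v, minkowski_comm w v, minkowski_comm z v, hvu, hvw]
  have hpair := minkowski_sub_of_mem_crookedPlane hu hw hv hvu hvw hq
  rw [hx, hxv] at hpair
  rcases hpair with ⟨hstem, hnorm⟩ | ⟨hwing, hside⟩ | ⟨hwing, hside⟩
  · obtain rfl : γ = 0 := (mul_eq_zero.mp hstem).resolve_right hvz.ne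
    simp only [zero_smul, add_zero, minkowski_add_right, minkowski_smul_right, minkowski_add_left,
      minkowski_smul_left, hu, hw, mul_zero, minkowski_comm w u, zero_add] at hnorm
    exact Or.inl ⟨rfl, by nlinarith⟩
  · simp only [minkowski_add_left, minkowski_smul_left, hu, mul_zero, minkowski_comm w u,
      zero_add] at hwing
    exact Or.inr (Or.inl ⟨nonpos_of_mul_nonneg_left hside hvz, hwing⟩)
  · simp only [minkowski_add_left, minkowski_smul_left, hw, mul_zero, add_zero,
      minkowski_comm z w] at hwing
    exact Or.inr (Or.inr ⟨nonneg_of_mul_nonpos_left hside hvz, hwing⟩)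

section CrookedCoords

variable {P Q R a b α β γ : ℝ}

theorem CrookedCoords.nonneg_and_add_nonpos_of_lt (hP : P < 0) (hQ : Q < 0) (hR : R < 0)
    (h : CrookedCoords P Q R a b α β γ) (hβ : β < a) : 0 ≤ γ ∧ α + b ≤ 0 := by
  rcases h with ⟨rfl, h⟩ | ⟨hγ, e⟩ | ⟨hγ, e⟩
  · exact ⟨le_rfl, nonpos_of_mul_nonneg_left h (sub_neg.mpr hβ)⟩
  · nlinarith
  · exact ⟨hγ, by nlinarith⟩

theorem CrookedCoords.not_rotate {a₁ b₁ a₂ b₂ : ℝ} (hP : P < 0) (hQ : Q < 0) (hR : R < 0)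
    (ha₁ : 0 < a₁) (hb₁ : 0 < b₁) (ha₂ : 0 < a₂) (hb₂ : 0 < b₂)
    (h : CrookedCoords P Q R a₁ b₁ α β γ) : ¬ CrookedCoords Q R P a₂ b₂ β γ α := by
  intro h'
  rcases le_or_gt γ 0 with hγ | hγ
  · obtain ⟨hα, hβ⟩ := h'.nonneg_and_add_nonpos_of_lt hQ hR hP (by linarith)
    obtain ⟨-, hα'⟩ := h.nonneg_and_add_nonpos_of_lt hP hQ hR (by linarith)
    linarith
  · have e₁ : (α + b₁) * P + γ * Q = 0 := by
      rcases h with ⟨rfl, -⟩ | ⟨hγ', -⟩ | ⟨-, e₁⟩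
      · exact absurd hγ (lt_irrefl 0)
      · linarith
      · exact e₁
    have hα : α < 0 := by nlinarith
    have e₂ : (γ - a₂) * Q + α * P = 0 := by
      rcases h' with ⟨rfl, -⟩ | ⟨-, e₂⟩ | ⟨hα', -⟩
      · exact absurd hα (lt_irrefl 0)
      · exact e₂
      · linarith
    -- `α * P + γ * Q` is `⟨q, w⟩`: it equals `-b₁ * P > 0` by `e₁` and `a₂ * Q < 0` by `e₂`.
    linarith [mul_neg_of_pos_of_neg hb₁ hP, mul_neg_of_pos_of_neg ha₂ hQ]

end CrookedCoords

theorem crooked_planes_disjoint_general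
    (v₁ v₂ v₁p v₁m v₂p v₂m p₁ p₂ : Fin 3 → ℝ)
    (hs₁ : 0 < minkowski v₁ v₁) (hs₂ : 0 < minkowski v₂ v₂)
    (hpar : ¬ ∃ c : ℝ, v₂ = c • v₁)
    (h₁p_null : minkowski v₁p v₁p = 0) (h₁p_fut : 0 < v₁p 2)
    (h₁p_orth : minkowski v₁ v₁p = 0)
    (h₁m_null : minkowski v₁m v₁m = 0) (h₁m_fut : 0 < v₁m 2)
    (h₁m_orth : minkowski v₁ v₁m = 0)
    (h₁span : ¬ ∃ c : ℝ, v₁p = c • v₁m)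
    (h₂p_orth : minkowski v₂ v₂p = 0)
    (h₂m_null : minkowski v₂m v₂m = 0) (h₂m_fut : 0 < v₂m 2)
    (h₂m_orth : minkowski v₂ v₂m = 0)
    (h₂span : ¬ ∃ c : ℝ, v₂p = c • v₂m)
    (hco₁₂m : minkowski v₁ v₂m ≤ 0)
    (hco₂₁p : minkowski v₂ v₁p ≤ 0)
    (hshare : v₁m = v₂p)
    (a₁ b₁ a₂ b₂ : ℝ) (ha₁ : 0 < a₁) (hb₁ : 0 < b₁) (ha₂ : 0 < a₂) (hb₂ : 0 < b₂)
    (hp₁ : p₁ = a₁ • v₁m - b₁ • v₁p)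
    (hp₂ : p₂ = a₂ • v₂m - b₂ • v₂p) :
    Disjoint (crookedPlane v₁ v₁p v₁m p₁) (crookedPlane v₂ v₂p v₂m p₂) := by
  subst hshare hp₁ hp₂
  have hu : IsFutureNull v₁p := ⟨h₁p_null, h₁p_fut⟩
  have hw : IsFutureNull v₁m := ⟨h₁m_null, h₁m_fut⟩
  have hz : IsFutureNull v₂m := ⟨h₂m_null, h₂m_fut⟩
  have hP := hu.minkowski_neg hw h₁span
  have hQ := hw.minkowski_neg hz h₂span
  have hR := minkowski_neg_of_not_parallel hu hw.1 hz hP.ne hs₁.ne' h₁p_orth h₁m_orth h₂p_orth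
    h₂m_orth hpar
  have hframe := det_gram_ne_zero_of_null hu.1 hw.1 hz.1 hP.ne hQ.ne hR.ne
  have he₁ : minkowski v₁ v₂m < 0 := hco₁₂m.lt_of_ne <|
    minkowski_ne_zero_of_orthogonal hframe hs₁.ne' h₁p_orth h₁m_orth
  have he₂ : minkowski v₂ v₁p < 0 := hco₂₁p.lt_of_ne <| minkowski_ne_zero_of_orthogonal
    (det_gram_ne_zero_of_null hw.1 hz.1 hu.1 hQ.ne hR.ne hP.ne) hs₂.ne' h₂p_orth h₂m_orth
  refine Set.disjoint_left.mpr fun q hq₁ hq₂ => ?_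
  obtain ⟨α, β, γ, rfl⟩ := exists_smul_add_smul_add_smul_eq hframe q
  rw [show α • v₁p + β • v₁m + γ • v₂m = β • v₁m + γ • v₂m + α • v₁p by abel] at hq₂
  exact (crookedCoords_of_mem_crookedPlane hu.1 hw.1 hP hs₁.le h₁p_orth h₁m_orth he₁ hq₁).not_rotate
    hP hQ hR ha₁ hb₁ ha₂ hb₂
    (crookedCoords_of_mem_crookedPlane hw.1 hz.1 hQ hs₂.le h₂p_orth h₂m_orth he₂ hq₂)

/-- Disjointness criterion for crooked planes directed by consistently
oriented spacelike vectors `v₁, v₂` with `v₁⁻ = v₂⁺`, whose vertices are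
suitably placed in the quadrants `aᵢ·vᵢ⁻ − bᵢ·vᵢ⁺` with `aᵢ, bᵢ > 0`. -/
theorem crooked_planes_disjoint
    (v₁ v₂ v₁p v₁m v₂p v₂m p₁ p₂ : Fin 3 → ℝ)
    (hs₁ : 0 < minkowski v₁ v₁) (hs₂ : 0 < minkowski v₂ v₂)
    (hpar : ¬ ∃ c : ℝ, v₂ = c • v₁)
    (h₁p_null : minkowski v₁p v₁p = 0) (h₁p_fut : 0 < v₁p 2)
    (h₁p_orth : minkowski v₁ v₁p = 0)
    (h₁m_null : minkowski v₁m v₁m = 0) (h₁m_fut : 0 < v₁m 2)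
    (h₁m_orth : minkowski v₁ v₁m = 0)
    (h₁span : ¬ ∃ c : ℝ, v₁p = c • v₁m)
    (h₂p_null : minkowski v₂p v₂p = 0) (h₂p_fut : 0 < v₂p 2)
    (h₂p_orth : minkowski v₂ v₂p = 0)
    (h₂m_null : minkowski v₂m v₂m = 0) (h₂m_fut : 0 < v₂m 2)
    (h₂m_orth : minkowski v₂ v₂m = 0)
    (h₂span : ¬ ∃ c : ℝ, v₂p = c • v₂m)
    (hco : minkowski v₁ v₂ < 0)
    (hco₁₂p : minkowski v₁ v₂p ≤ 0) (hco₁₂m : minkowski v₁ v₂m ≤ 0)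
    (hco₂₁p : minkowski v₂ v₁p ≤ 0) (hco₂₁m : minkowski v₂ v₁m ≤ 0)
    (hshare : v₁m = v₂p)
    (a₁ b₁ a₂ b₂ : ℝ) (ha₁ : 0 < a₁) (hb₁ : 0 < b₁) (ha₂ : 0 < a₂) (hb₂ : 0 < b₂)
    (hp₁ : p₁ = a₁ • v₁m - b₁ • v₁p)
    (hp₂ : p₂ = a₂ • v₂m - b₂ • v₂p) :
    Disjoint (crookedPlane v₁ v₁p v₁m p₁) (crookedPlane v₂ v₂p v₂m p₂) :=
  crooked_planes_disjoint_general v₁ v₂ v₁p v₁m v₂p v₂m p₁ p₂ hs₁ hs₂ hpar h₁p_null h₁p_fut h₁p_orth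
    h₁m_null h₁m_fut h₁m_orth h₁span h₂p_orth h₂m_null h₂m_fut h₂m_orth h₂span hco₁₂m hco₂₁p hshare
    a₁ b₁ a₂ b₂ ha₁ hb₁ ha₂ hb₂ hp₁ hp₂
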